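/- arXiv:1309.7981 — 2 statements merged into one kernel-verified Lean document; each statement's English description precedes it below -/
import Mathlib

section
/- Let (Γ, μ) be a σ-finite measure space, τ : Γ → (0,∞) measurable, and h : Γ × ℝ → ℝ jointly measurable such that for μ-almost every γ ∈ Γ the function t ↦ h(γ,t) is differentiable at every point of [0, τ(γ)] with derivative ∂ₜh(γ,t), and h(γ,·), ∂ₜh(γ,·) are integrable on [0, τ(γ)]. Then ∫_Γ |h(γ,0)| dμ(γ) ≤ ∫_Γ ∫₀^{τ(γ)} |∂ₜh(γ,t)| dt dμ(γ) + ∫_Γ ∫₀^{τ(γ)} (1/τ(γ)) |h(γ,t)| dt dμ(γ), where all integrals are Lebesgue integrals with values in [0,∞]. -/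
/-!
On each trajectory, `h γ 0 = h γ t - ∫₀ᵗ ∂ₜh`, so `|h γ 0| ≤ |h γ t| + ∫₀^τ |∂ₜh|` for every
`t ∈ (0, τ γ]`. Averaging this over `t` gives the estimate fibrewise, and integrating over `Γ`
gives the theorem; the last step only needs the `1 / τ`-weighted fibre integral to be measurable in
`γ`, which follows from the joint measurability of `h`.
-/

open MeasureTheory Set ENNReal

section LAverage

variable {α : Type*} [MeasurableSpace α] {μ : Measure α} {s : Set α}

theorem setLAverage_add_const (hs₀ : μ s ≠ 0) (hs : μ s ≠ ∞) (f : α → ℝ≥0∞) (d : ℝ≥0∞) :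
    ⨍⁻ x in s, (f x + d) ∂μ = ⨍⁻ x in s, f x ∂μ + d := by
  rw [setLAverage_eq, setLAverage_eq, lintegral_add_right _ measurable_const, setLIntegral_const,
    ENNReal.add_div, ENNReal.mul_div_cancel_right hs₀ hs]

theorem le_setLAverage_add_of_forall_mem_le (hs_meas : MeasurableSet s) (hs₀ : μ s ≠ 0)
    (hs : μ s ≠ ∞) {c d : ℝ≥0∞} {g : α → ℝ≥0∞} (hle : ∀ x ∈ s, c ≤ g x + d) :
    c ≤ ⨍⁻ x in s, g x ∂μ + d :=
  calc c = ⨍⁻ _ in s, c ∂μ := (setLAverage_const hs₀ hs c).symm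
    _ ≤ ⨍⁻ x in s, (g x + d) ∂μ := laverage_mono_ae (ae_restrict_of_forall_mem hs_meas hle)
    _ = ⨍⁻ x in s, g x ∂μ + d := setLAverage_add_const hs₀ hs g d

end LAverage

theorem Measurable.setLIntegral_Ioc {α : Type*} [MeasurableSpace α] {F : α → ℝ → ℝ≥0∞}
    (hF : Measurable (Function.uncurry F)) {a b : α → ℝ} (ha : Measurable a)
    (hb : Measurable b) : Measurable fun x => ∫⁻ t in Ioc (a x) (b x), F x t := by
  have hS : MeasurableSet {p : α × ℝ | p.2 ∈ Ioc (a p.1) (b p.1)} :=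
    (measurableSet_lt (ha.comp measurable_fst) measurable_snd).inter
      (measurableSet_le measurable_snd (hb.comp measurable_fst))
  convert (hF.indicator hS).lintegral_prod_right' (ν := volume) using 2 with x
  rw [← lintegral_indicator measurableSet_Ioc]
  rfl

section Interval

variable {f f' : ℝ → ℝ} {a b : ℝ}

theorem ofReal_abs_sub_le_lintegral_deriv (hderiv : ∀ t ∈ Icc a b, HasDerivAt f (f' t) t)
    (hint : IntegrableOn f' (Icc a b)) {t : ℝ} (ht : t ∈ Icc a b) :
    ENNReal.ofReal |f t - f a| ≤ ∫⁻ s in Ioc a b, ENNReal.ofReal |f' s| := by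
  have hsub : Icc a t ⊆ Icc a b := Icc_subset_Icc_right ht.2
  have hftc : ∫ s in a..t, f' s = f t - f a :=
    intervalIntegral.integral_eq_sub_of_hasDerivAt
      (fun s hs => hderiv s (hsub (uIcc_of_le ht.1 ▸ hs)))
      ((hint.mono_set (uIcc_of_le ht.1 ▸ hsub)).intervalIntegrable)
  simp_rw [← Real.enorm_eq_ofReal_abs, ← hftc, intervalIntegral.integral_of_le ht.1]
  calc ‖∫ s in Ioc a t, f' s‖ₑ ≤ ∫⁻ s in Ioc a t, ‖f' s‖ₑ := enorm_integral_le_lintegral_enorm _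
    _ ≤ ∫⁻ s in Ioc a b, ‖f' s‖ₑ := lintegral_mono_set (Ioc_subset_Ioc_right ht.2)

theorem ofReal_abs_le_lintegral_deriv_add_lintegral_div (hab : a < b)
    (hderiv : ∀ t ∈ Icc a b, HasDerivAt f (f' t) t) (hint : IntegrableOn f' (Icc a b)) :
    ENNReal.ofReal |f a| ≤ (∫⁻ t in Ioc a b, ENNReal.ofReal |f' t|) +
      ∫⁻ t in Ioc a b, ENNReal.ofReal (1 / (b - a) * |f t|) := by
  have hpoint : ∀ t ∈ Ioc a b, ENNReal.ofReal |f a| ≤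
      ENNReal.ofReal |f t| + ∫⁻ s in Ioc a b, ENNReal.ofReal |f' s| := fun t ht => by
    have htri : |f a| ≤ |f t| + |f t - f a| :=
      abs_sub_comm (f a) (f t) ▸ sub_le_iff_le_add'.1 (abs_sub_abs_le_abs_sub _ _)
    calc ENNReal.ofReal |f a| ≤ ENNReal.ofReal (|f t| + |f t - f a|) := ofReal_le_ofReal htri
      _ ≤ _ := ofReal_add_le.trans <| add_le_add_right
          (ofReal_abs_sub_le_lintegral_deriv hderiv hint (Ioc_subset_Icc_self ht)) _
  have hvol : volume (Ioc a b) = ENNReal.ofReal (b - a) := Real.volume_Ioc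
  have havg : ⨍⁻ t in Ioc a b, ENNReal.ofReal |f t| ∂volume =
      ∫⁻ t in Ioc a b, ENNReal.ofReal (1 / (b - a) * |f t|) := by
    have hinv : ENNReal.ofReal (1 / (b - a)) = (ENNReal.ofReal (b - a))⁻¹ := by
      rw [one_div, ENNReal.ofReal_inv_of_pos (sub_pos.2 hab)]
    simp_rw [ENNReal.ofReal_mul (one_div_nonneg.2 (sub_pos.2 hab).le)]
    rw [setLAverage_eq, lintegral_const_mul' _ _ ENNReal.ofReal_ne_top, hvol, hinv,
      ENNReal.div_eq_inv_mul]
  rw [add_comm, ← havg]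
  exact le_setLAverage_add_of_forall_mem_le measurableSet_Ioc (by simp [hvol, hab])
    (by simp [hvol]) hpoint

end Interval

theorem trace_estimate_trajectory_general {Γ : Type*} [MeasurableSpace Γ]
    (μ : Measure Γ)
    (τ : Γ → ℝ) (hτ_meas : Measurable τ) (hτ_pos : ∀ γ, 0 < τ γ)
    (h h' : Γ → ℝ → ℝ) (h_meas : Measurable (Function.uncurry h))
    (hderiv : ∀ᵐ γ ∂μ, ∀ t ∈ Set.Icc (0 : ℝ) (τ γ), HasDerivAt (h γ) (h' γ t) t)
    (hint : ∀ᵐ γ ∂μ, IntegrableOn (h γ) (Set.Icc 0 (τ γ))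
      ∧ IntegrableOn (h' γ) (Set.Icc 0 (τ γ))) :
    ∫⁻ γ, ENNReal.ofReal |h γ 0| ∂μ ≤
      (∫⁻ γ, (∫⁻ t in Set.Ioc 0 (τ γ), ENNReal.ofReal |h' γ t|) ∂μ) +
        ∫⁻ γ, (∫⁻ t in Set.Ioc 0 (τ γ), ENNReal.ofReal ((1 / τ γ) * |h γ t|)) ∂μ := by
  have hmeas : Measurable fun γ => ∫⁻ t in Ioc 0 (τ γ), ENNReal.ofReal (1 / τ γ * |h γ t|) :=
    Measurable.setLIntegral_Ioc (by fun_prop) measurable_const hτ_meas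
  have hfibre : ∀ᵐ γ ∂μ, ENNReal.ofReal |h γ 0| ≤
      (∫⁻ t in Ioc 0 (τ γ), ENNReal.ofReal |h' γ t|) +
        ∫⁻ t in Ioc 0 (τ γ), ENNReal.ofReal (1 / τ γ * |h γ t|) := by
    filter_upwards [hderiv, hint] with γ hd hi
    simpa using ofReal_abs_le_lintegral_deriv_add_lintegral_div (hτ_pos γ) hd hi.2
  exact (lintegral_mono_ae hfibre).trans_eq (lintegral_add_right _ hmeas)

/-- Trajectory-coordinate form of the boundary trace estimate
`‖f|_{∂±SM}‖_{L¹(∂±SM)} ≤ ‖f‖_𝒲`. -/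
theorem trace_estimate_trajectory {Γ : Type*} [MeasurableSpace Γ]
    (μ : Measure Γ) [SigmaFinite μ]
    (τ : Γ → ℝ) (hτ_meas : Measurable τ) (hτ_pos : ∀ γ, 0 < τ γ)
    (h h' : Γ → ℝ → ℝ) (h_meas : Measurable (Function.uncurry h))
    (hderiv : ∀ᵐ γ ∂μ, ∀ t ∈ Set.Icc (0 : ℝ) (τ γ), HasDerivAt (h γ) (h' γ t) t)
    (hint : ∀ᵐ γ ∂μ, IntegrableOn (h γ) (Set.Icc 0 (τ γ))
      ∧ IntegrableOn (h' γ) (Set.Icc 0 (τ γ))) :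
    ∫⁻ γ, ENNReal.ofReal |h γ 0| ∂μ ≤
      (∫⁻ γ, (∫⁻ t in Set.Ioc 0 (τ γ), ENNReal.ofReal |h' γ t|) ∂μ) +
        ∫⁻ γ, (∫⁻ t in Set.Ioc 0 (τ γ), ENNReal.ofReal ((1 / τ γ) * |h γ t|)) ∂μ :=
  trace_estimate_trajectory_general μ τ hτ_meas hτ_pos h h' h_meas hderiv hint
end

section
/- Let (Γ, μ) be a σ-finite measure space, τ : Γ → (0,∞) measurable with τ(γ) ≤ T₀ for μ-a.e. γ, and σ : Γ × ℝ → [0,∞) jointly measurable with σ(γ,t) ≤ S₀ for a.e. (γ,t), where S₀, T₀ are finite constants. Let f : Γ × ℝ → ℝ be jointly measurable with ∫_Γ ∫₀^{τ(γ)} |f(γ,t)| dt dμ(γ) < ∞. Then ∫_Γ ∫₀^{τ(γ)} ( ∫ₜ^{τ(γ)} σ(γ,s) · exp(−∫ₜˢ σ(γ,u) du) ds ) · |f(γ,t)| dt dμ(γ) ≤ (1 − e^{−S₀T₀}) · ∫_Γ ∫₀^{τ(γ)} |f(γ,t)| dt dμ(γ). -/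
open MeasureTheory Set Filter

/-!
Along a trajectory write `F(s) = ∫ₜˢ σ`. Since `F` is absolutely continuous with `F' = σ` a.e.,
the kernel `σ e^{-F}` is the a.e. derivative of `-e^{-F}`, so the inner integral equals
`1 - e^{-F(τ)}`, the probability of scattering before exit. As `F(τ) ≤ S₀ (τ - t) ≤ S₀ T₀`, the
kernel is at most `1 - e^{-S₀ T₀}`, and the bound follows by integrating against `|f|`.
-/

theorem LipschitzOnWith.comp_absolutelyContinuousOnInterval {X Y : Type*} [PseudoMetricSpace X]
    [PseudoMetricSpace Y] {φ : X → Y} {K : NNReal} {s : Set X} {f : ℝ → X} {a b : ℝ}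
    (hφ : LipschitzOnWith K φ s) (hf : AbsolutelyContinuousOnInterval f a b)
    (hfs : MapsTo f (uIcc a b) s) : AbsolutelyContinuousOnInterval (φ ∘ f) a b := by
  have hKf := Tendsto.const_mul (K : ℝ) hf
  rw [mul_zero] at hKf
  refine squeeze_zero' (Eventually.of_forall fun _ ↦ Finset.sum_nonneg fun _ _ ↦ dist_nonneg)
    ?_ hKf
  rw [eventually_inf_principal]
  filter_upwards with E hE
  rw [Finset.mul_sum]
  gcongr with i hi
  exact hφ.dist_le_mul _ (hfs (hE.1 i hi).1) _ (hfs (hE.1 i hi).2)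

theorem ContDiff.comp_absolutelyContinuousOnInterval {E : Type*} [NormedAddCommGroup E]
    [NormedSpace ℝ E] {φ : ℝ → E} {f : ℝ → ℝ} {a b : ℝ}
    (hφ : ContDiff ℝ 1 φ) (hf : AbsolutelyContinuousOnInterval f a b) :
    AbsolutelyContinuousOnInterval (φ ∘ f) a b := by
  obtain ⟨C, hC⟩ := hf.exists_bound
  obtain ⟨K, hK⟩ := hφ.contDiffOn.exists_lipschitzOnWith (s := Icc (-C) C) (by decide)
    (convex_Icc _ _) isCompact_Icc
  exact hK.comp_absolutelyContinuousOnInterval hf fun x hx ↦ abs_le.mp (hC x hx)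

theorem IntervalIntegrable.integral_mul_exp_neg_integral {σ : ℝ → ℝ} {a b : ℝ}
    (hσ : IntervalIntegrable σ volume a b) :
    ∫ s in a..b, σ s * Real.exp (-∫ u in a..s, σ u) = 1 - Real.exp (-∫ u in a..b, σ u) := by
  set G : ℝ → ℝ := (fun y ↦ -Real.exp (-y)) ∘ fun x ↦ ∫ u in a..x, σ u with hG_def
  have hG : AbsolutelyContinuousOnInterval G a b :=
    ContDiff.comp_absolutelyContinuousOnInterval (by fun_prop)
      (hσ.absolutelyContinuousOnInterval_intervalIntegral left_mem_uIcc)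
  have hderiv : ∀ᵐ x, x ∈ uIoc a b → deriv G x = σ x * Real.exp (-∫ u in a..x, σ u) := by
    filter_upwards [hσ.ae_hasDerivAt_integral] with x hx hxab
    have hF := hx (uIoc_subset_uIcc hxab) a left_mem_uIcc
    have hφ : HasDerivAt (fun y ↦ -Real.exp (-y)) (Real.exp (-∫ u in a..x, σ u))
        (∫ u in a..x, σ u) := by
      simpa using (hasDerivAt_id _).fun_neg.exp.fun_neg
    rw [(hφ.comp x hF).deriv, mul_comm]
  rw [← intervalIntegral.integral_congr_ae hderiv, hG.integral_deriv_eq_sub]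
  simp only [hG_def, Function.comp_apply, intervalIntegral.integral_same, neg_zero, Real.exp_zero]
  ring

theorem IntervalIntegrable.integral_mul_exp_neg_integral_le {σ : ℝ → ℝ} {S a b : ℝ}
    (hσ : IntervalIntegrable σ volume a b) (hab : a ≤ b) (hσS : ∀ᵐ s, σ s ≤ S) :
    ∫ s in a..b, σ s * Real.exp (-∫ u in a..s, σ u) ≤ 1 - Real.exp (-(S * (b - a))) := by
  rw [hσ.integral_mul_exp_neg_integral]
  gcongr
  calc ∫ u in a..b, σ u ≤ ∫ _ in a..b, S :=
        intervalIntegral.integral_mono_ae hab hσ intervalIntegrable_const hσS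
    _ = S * (b - a) := by rw [intervalIntegral.integral_const, smul_eq_mul, mul_comm]

theorem T1_T0_inverse_bound_general {Γ : Type*} [MeasurableSpace Γ]
    (μ : Measure Γ)
    (τ : Γ → ℝ)
    (T₀ : ℝ) (hτ_bdd : ∀ᵐ γ ∂μ, τ γ ≤ T₀)
    (σ : Γ → ℝ → ℝ) (hσ_meas : Measurable (Function.uncurry σ))
    (hσ_nonneg : ∀ γ t, 0 ≤ σ γ t)
    (S₀ : ℝ) (hσ_bdd : ∀ᵐ p ∂(μ.prod volume), σ p.1 p.2 ≤ S₀)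
    (f : Γ → ℝ → ℝ) :
    ∫⁻ γ, (∫⁻ t in Set.Ioc 0 (τ γ),
        ENNReal.ofReal ((∫ s in t..(τ γ), σ γ s * Real.exp (-(∫ u in t..s, σ γ u))) * |f γ t|)) ∂μ
      ≤ ENNReal.ofReal (1 - Real.exp (-(S₀ * T₀))) *
          ∫⁻ γ, (∫⁻ t in Set.Ioc 0 (τ γ), ENNReal.ofReal |f γ t|) ∂μ := by
  have hkernel : ∀ᵐ γ ∂μ, ∀ t ∈ Ioc 0 (τ γ),
      ∫ s in t..(τ γ), σ γ s * Real.exp (-(∫ u in t..s, σ γ u)) ≤ 1 - Real.exp (-(S₀ * T₀)) := by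
    filter_upwards [hτ_bdd, Measure.ae_ae_of_ae_prod hσ_bdd] with γ hτγ hσγ t ht
    obtain ⟨s₀, hs₀⟩ := hσγ.exists
    have hS₀ : 0 ≤ S₀ := (hσ_nonneg γ s₀).trans hs₀
    have hσγ_int : IntervalIntegrable (σ γ) volume t (τ γ) :=
      (intervalIntegrable_const (c := S₀)).mono_fun'
        (hσ_meas.comp measurable_prodMk_left).aestronglyMeasurable
        (ae_restrict_of_ae <| hσγ.mono fun s hs ↦
          (Real.norm_of_nonneg (hσ_nonneg γ s)).trans_le hs)
    refine (hσγ_int.integral_mul_exp_neg_integral_le ht.2 hσγ).trans ?_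
    gcongr
    linarith [ht.1]
  calc _ ≤ ∫⁻ γ, (∫⁻ t in Ioc 0 (τ γ),
          ENNReal.ofReal (1 - Real.exp (-(S₀ * T₀))) * ENNReal.ofReal |f γ t|) ∂μ := by
        refine lintegral_mono_ae (hkernel.mono fun γ hγ ↦ setLIntegral_mono' measurableSet_Ioc
          fun t ht ↦ ?_)
        rw [← ENNReal.ofReal_mul' (abs_nonneg _)]
        gcongr
        exact hγ t ht
    _ = _ := by simp_rw [lintegral_const_mul' _ _ ENNReal.ofReal_ne_top]

/-- Trajectory-coordinate form of the key estimate
`‖T₁T₀⁻¹f‖_{L¹} ≤ (1 − e^{−‖σ_p‖_∞ ‖τ‖_∞}) ‖f‖_{L¹}`. -/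
theorem T1_T0_inverse_bound {Γ : Type*} [MeasurableSpace Γ]
    (μ : Measure Γ) [SigmaFinite μ]
    (τ : Γ → ℝ) (hτ_meas : Measurable τ) (hτ_pos : ∀ γ, 0 < τ γ)
    (T₀ : ℝ) (hτ_bdd : ∀ᵐ γ ∂μ, τ γ ≤ T₀)
    (σ : Γ → ℝ → ℝ) (hσ_meas : Measurable (Function.uncurry σ))
    (hσ_nonneg : ∀ γ t, 0 ≤ σ γ t)
    (S₀ : ℝ) (hσ_bdd : ∀ᵐ p ∂(μ.prod volume), σ p.1 p.2 ≤ S₀)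
    (f : Γ → ℝ → ℝ) (hf_meas : Measurable (Function.uncurry f))
    (hf : (∫⁻ γ, (∫⁻ t in Set.Ioc 0 (τ γ), ENNReal.ofReal |f γ t|) ∂μ) < ⊤) :
    ∫⁻ γ, (∫⁻ t in Set.Ioc 0 (τ γ),
        ENNReal.ofReal ((∫ s in t..(τ γ), σ γ s * Real.exp (-(∫ u in t..s, σ γ u))) * |f γ t|)) ∂μ
      ≤ ENNReal.ofReal (1 - Real.exp (-(S₀ * T₀))) *
          ∫⁻ γ, (∫⁻ t in Set.Ioc 0 (τ γ), ENNReal.ofReal |f γ t|) ∂μ :=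
  T1_T0_inverse_bound_general μ τ T₀ hτ_bdd σ hσ_meas hσ_nonneg S₀ hσ_bdd f
end
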